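/- Let q be a complex-valued elliptic quadratic form on ℝ^(2n) with Re q ≤ 0, Re q ≢ 0, and whose Hamilton map F has no real eigenvalue. Then for every nonzero X₀ ∈ ℝ^(2n), there exists an integer j₀ with 0 ≤ j₀ ≤ 2n-1 such that Re q((Im F)^{j₀} X₀) < 0 and Re q((Im F)^j X₀) = 0 for all 0 ≤ j < j₀. Consequently the symbol q has finite order at most 4n-2 at every nonzero point of its numerical range. -/

import Mathlib

open scoped BigOperators
open Finset

noncomputable section

/-- Phase space `ℝ^n × ℝ^n` (representing `ℝ^(2n)` with coordinates `(x, ξ)`). -/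
abbrev RV (n : ℕ) := (Fin n → ℝ) × (Fin n → ℝ)

/-- Complexified phase space `ℂ^n × ℂ^n`. -/
abbrev CV (n : ℕ) := (Fin n → ℂ) × (Fin n → ℂ)

/-- The standard symplectic form `σ((x,ξ),(y,η)) = ξ·y - x·η` on `ℝ^(2n)`. -/
def sympR {n : ℕ} (X Y : RV n) : ℝ := (∑ i, X.2 i * Y.1 i) - ∑ i, X.1 i * Y.2 i

/-- The standard symplectic form extended bilinearly to `ℂ^(2n)`. -/
def sympC {n : ℕ} (X Y : CV n) : ℂ := (∑ i, X.2 i * Y.1 i) - ∑ i, X.1 i * Y.2 i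

/-- Embedding of `ℝ^(2n)` into `ℂ^(2n)`. -/
def toC {n : ℕ} (X : RV n) : CV n := (fun i => (X.1 i : ℂ), fun i => (X.2 i : ℂ))

/-!
Suppose `Re q` vanishes at `H ^ j X₀` for every `j < 2n`. Since `Re q ≤ 0`, each zero of `Re q`
lies in the kernel of its polar form, so `G` kills these vectors, and by Cayley–Hamilton the whole
cyclic space `V` spanned by the `H ^ j X₀`. Thus `F = G + iH` acts on the complexification of `V`
as `iH`, and has there an eigenvector `A + iB` (`A, B ∈ V`) whose eigenvalue `c` is not real.
As `H` is `σ`-symmetric, `σ(X, H² X) = σ(H X, H X) = 0`; for `X = A, B` this gives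
`Im c · (Im q A + Im q B) = 0`. But `Re q = 0` on `V`, so by ellipticity `Im q` has no zero on
`V \ {0}`, hence a constant sign there, and `A = B = 0`.
-/

open Polynomial Module QuadraticMap

namespace QuadraticMap

variable {M : Type*} [AddCommGroup M] [Module ℝ M]

theorem polar_eq_zero_of_nonpos_of_eq_zero {Q : QuadraticMap ℝ M ℝ} (hQ : ∀ x, Q x ≤ 0) {x : M}
    (hx : Q x = 0) (y : M) : polar Q x y = 0 := by
  by_contra hxy
  have hline : ∀ t : ℝ, Q (t • x + y) = Q y + t * polar Q x y := fun t => by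
    rw [QuadraticMap.map_add (⇑Q), QuadraticMap.map_smul, hx, polar_smul_left, smul_eq_mul,
      smul_eq_mul]; ring
  have := hQ (((1 - Q y) / polar Q x y) • x + y)
  rw [hline, div_mul_cancel₀ _ hxy] at this
  linarith

theorem map_smul_add_smul (Q : QuadraticMap ℝ M ℝ) (a b : ℝ) (x y : M) :
    Q (a • x + b • y) = a ^ 2 * Q x + b ^ 2 * Q y + a * b * polar Q x y := by
  rw [QuadraticMap.map_add (⇑Q), QuadraticMap.map_smul, QuadraticMap.map_smul, polar_smul_left,
    polar_smul_right]
  simp only [smul_eq_mul]; ring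

theorem Anisotropic.pos_of_pos {Q : QuadraticMap ℝ M ℝ} (hQ : Q.Anisotropic) {x y : M}
    (hx : 0 < Q x) (hy : y ≠ 0) : 0 < Q y := by
  by_contra! hle
  have hy' : Q y < 0 := hle.lt_of_ne fun h => hy (hQ y h)
  -- `Q` changes sign along the segment `[x, y]`, so by anisotropy the segment passes through `0`.
  have hcont : Continuous fun t : ℝ => Q ((1 - t) • x + t • y) := by
    simp only [map_smul_add_smul]; fun_prop
  obtain ⟨t, -, ht⟩ := intermediate_value_Icc' zero_le_one hcont.continuousOn
    (show (0 : ℝ) ∈ Set.Icc _ _ by simp [hx.le, hy'.le])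
  have hseg : (1 - t) • x + t • y = 0 := hQ _ ht
  have : Q (t • y) = Q ((1 - t) • x) := by
    rw [eq_neg_of_add_eq_zero_right hseg, QuadraticMap.map_neg]
  rw [QuadraticMap.map_smul, QuadraticMap.map_smul, smul_eq_mul, smul_eq_mul] at this
  have ht0 : t ≠ 0 := by
    rintro rfl
    simp only [sub_zero, one_smul, zero_smul, add_zero] at ht
    linarith
  nlinarith [mul_pos (mul_self_pos.2 ht0) (neg_pos.2 hy'),
    mul_nonneg (mul_self_nonneg (1 - t)) hx.le]

theorem Anisotropic.eq_zero_of_add_eq_zero {Q : QuadraticMap ℝ M ℝ} (hQ : Q.Anisotropic)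
    {x y : M} (h : Q x + Q y = 0) : x = 0 ∧ y = 0 := by
  by_cases hx : x = 0
  · subst hx
    exact ⟨rfl, hQ y (by simpa using h)⟩
  by_cases hy : y = 0
  · subst hy
    exact absurd (hQ x (by simpa using h)) hx
  rcases (show Q x ≠ 0 from mt (hQ x) hx).lt_or_gt with hneg | hpos
  · linarith [hQ.pos_of_pos (x := y) (by linarith) hx]
  · linarith [hQ.pos_of_pos hpos hy]

end QuadraticMap

namespace Module.End

variable {K V : Type*} [Field K] [AddCommGroup V] [Module K V] [FiniteDimensional K V]

theorem pow_apply_mem_of_forall_lt_finrank (f : End K V) {x : V} {p : Submodule K V}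
    (hp : ∀ j < finrank K V, (f ^ j) x ∈ p) (k : ℕ) : (f ^ k) x ∈ p := by
  have hdeg : (X ^ k %ₘ f.charpoly).degree < finrank K V := by
    have := degree_modByMonic_lt (X ^ k) f.charpoly_monic
    rwa [degree_eq_natDegree f.charpoly_monic.ne_zero, LinearMap.charpoly_natDegree] at this
  rw [LinearMap.pow_eq_aeval_mod_charpoly, aeval_eq_sum_range, LinearMap.sum_apply]
  refine p.sum_mem fun i _ => ?_
  rw [LinearMap.smul_apply]
  by_cases hi : i < finrank K V
  · exact p.smul_mem _ (hp i hi)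
  · rw [coeff_eq_zero_of_degree_lt (hdeg.trans_le (by exact_mod_cast not_lt.1 hi)), zero_smul]
    exact p.zero_mem

theorem apply_mem_span_range_pow_apply {R M : Type*} [Semiring R] [AddCommMonoid M] [Module R M]
    (f : End R M) (x : M) {y : M} (hy : y ∈ Submodule.span R (Set.range fun j => (f ^ j) x)) :
    f y ∈ Submodule.span R (Set.range fun j => (f ^ j) x) := by
  refine (Submodule.span_le (p := (Submodule.span R _).comap f)).2 ?_ hy
  rintro _ ⟨j, rfl⟩
  exact Submodule.subset_span ⟨j + 1, by simp only [pow_succ', Module.End.mul_apply]⟩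

theorem exists_eigenvector_mem_of_invariant [IsAlgClosed K] (f : End K V) {W : Submodule K V}
    (hW : W ≠ ⊥) (hfW : ∀ z ∈ W, f z ∈ W) : ∃ c : K, ∃ z ∈ W, z ≠ 0 ∧ f z = c • z := by
  have : Nontrivial W := Submodule.nontrivial_iff_ne_bot.2 hW
  obtain ⟨c, hc⟩ := exists_eigenvalue (f.restrict hfW)
  obtain ⟨z, hz⟩ := hc.exists_hasEigenvector
  refine ⟨c, z, z.2, fun h => hz.2 (Subtype.ext h), ?_⟩
  simpa [LinearMap.coe_restrict_apply] using congrArg Subtype.val hz.apply_eq_smul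

end Module.End

section Symplectic

variable {n : ℕ}

theorem sympR_self (X : RV n) : sympR X X = 0 := by
  simp [sympR, mul_comm]

theorem eq_zero_of_forall_sympR_eq_zero {W : RV n} (h : ∀ Y : RV n, sympR Y W = 0) : W = 0 := by
  have hsq : ∑ i, (W.1 i ^ 2 + W.2 i ^ 2) = 0 := by
    rw [← h (-W.2, W.1)]
    simp [sympR, Finset.sum_add_distrib, pow_two]
  have hterm := (Finset.sum_eq_zero_iff_of_nonneg fun i _ => by positivity).1 hsq
  refine Prod.ext (funext fun i => ?_) (funext fun i => ?_) <;>
    simp only [Prod.fst_zero, Prod.snd_zero, Pi.zero_apply] <;>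
    nlinarith [hterm i (Finset.mem_univ i), sq_nonneg (W.1 i), sq_nonneg (W.2 i)]

def IsHamiltonMap (Q : QuadraticMap ℝ (RV n) ℝ) (K : Module.End ℝ (RV n)) : Prop :=
  ∀ X Y : RV n, polar Q X Y / 2 = sympR X (K Y)

namespace IsHamiltonMap

variable {Q : QuadraticMap ℝ (RV n) ℝ} {K : Module.End ℝ (RV n)}

theorem apply_eq (hK : IsHamiltonMap Q K) (X : RV n) : Q X = sympR X (K X) := by
  rw [← hK, polar_self, nsmul_eq_mul]; ring

theorem sympR_comm (hK : IsHamiltonMap Q K) (X Y : RV n) : sympR X (K Y) = sympR Y (K X) := by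
  rw [← hK, ← hK, polar_comm]

theorem map_eq_zero_of_nonpos (hK : IsHamiltonMap Q K) (hQ : ∀ X, Q X ≤ 0) {X : RV n}
    (hX : Q X = 0) : K X = 0 :=
  eq_zero_of_forall_sympR_eq_zero fun Y => by
    rw [← hK, polar_comm, polar_eq_zero_of_nonpos_of_eq_zero hQ hX, zero_div]

theorem polar_apply_self_eq_zero (hK : IsHamiltonMap Q K) (X : RV n) : polar Q X (K X) = 0 := by
  have : polar Q X (K X) / 2 = 0 := by rw [hK, hK.sympR_comm, sympR_self]
  linarith

theorem apply_add_apply_eq_zero (hK : IsHamiltonMap Q K) {A B : RV n} {a b : ℝ} (ha : a ≠ 0)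
    (hA : K A = a • A + b • B) (hB : K B = -b • A + a • B) : Q A + Q B = 0 := by
  have hAA := hK.polar_apply_self_eq_zero A
  have hBB := hK.polar_apply_self_eq_zero B
  rw [hA, polar_add_right, polar_smul_right, polar_smul_right, polar_self] at hAA
  rw [hB, polar_add_right, polar_smul_right, polar_smul_right, polar_self, polar_comm _ B A] at hBB
  simp only [smul_eq_mul, nsmul_eq_mul, Nat.cast_ofNat] at hAA hBB
  have : a * (2 * (Q A + Q B)) = 0 := by linear_combination hAA + hBB
  simpa [ha] using this

end IsHamiltonMap

end Symplectic

section Complexification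

variable {n : ℕ}

def ofReIm (A B : RV n) : CV n := toC A + Complex.I • toC B

theorem ofReIm_fst_apply (A B : RV n) (i : Fin n) : (ofReIm A B).1 i = ⟨A.1 i, B.1 i⟩ := by
  apply Complex.ext <;> simp [ofReIm, toC]

theorem ofReIm_snd_apply (A B : RV n) (i : Fin n) : (ofReIm A B).2 i = ⟨A.2 i, B.2 i⟩ := by
  apply Complex.ext <;> simp [ofReIm, toC]

theorem ofReIm_inj {A B A' B' : RV n} : ofReIm A B = ofReIm A' B' ↔ A = A' ∧ B = B' := by
  simp only [Prod.ext_iff, funext_iff, ofReIm_fst_apply, ofReIm_snd_apply, Complex.mk.injEq]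
  grind

theorem ofReIm_zero : ofReIm (0 : RV n) 0 = 0 := by
  ext i <;> apply Complex.ext <;> simp [ofReIm_fst_apply, ofReIm_snd_apply]

theorem ofReIm_add (A B A' B' : RV n) : ofReIm A B + ofReIm A' B' = ofReIm (A + A') (B + B') := by
  ext i <;> apply Complex.ext <;> simp [ofReIm_fst_apply, ofReIm_snd_apply]

theorem smul_ofReIm (c : ℂ) (A B : RV n) :
    c • ofReIm A B = ofReIm (c.re • A - c.im • B) (c.re • B + c.im • A) := by
  ext i <;> apply Complex.ext <;> simp [ofReIm_fst_apply, ofReIm_snd_apply]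

theorem map_ofReIm {G H : Module.End ℝ (RV n)} {F : CV n →ₗ[ℂ] CV n}
    (hGH : ∀ X : RV n, F (toC X) = toC (G X) + Complex.I • toC (H X)) (A B : RV n) :
    F (ofReIm A B) = ofReIm (G A - H B) (H A + G B) := by
  have hGH' : ∀ X, F (toC X) = ofReIm (G X) (H X) := hGH
  have hI : Complex.I • ofReIm (G B) (H B) = ofReIm (-H B) (G B) := by simp [smul_ofReIm]
  change F (toC A + Complex.I • toC B) = _
  rw [map_add, map_smul, hGH', hGH', hI, ofReIm_add, sub_eq_add_neg, add_comm (H A)]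

def Submodule.complexify (V : Submodule ℝ (RV n)) : Submodule ℂ (CV n) where
  carrier := {Z | ∃ A ∈ V, ∃ B ∈ V, ofReIm A B = Z}
  zero_mem' := ⟨0, V.zero_mem, 0, V.zero_mem, ofReIm_zero⟩
  add_mem' := by
    rintro _ _ ⟨A, hA, B, hB, rfl⟩ ⟨A', hA', B', hB', rfl⟩
    exact ⟨A + A', V.add_mem hA hA', B + B', V.add_mem hB hB', (ofReIm_add ..).symm⟩
  smul_mem' := by
    rintro c _ ⟨A, hA, B, hB, rfl⟩
    exact ⟨_, V.sub_mem (V.smul_mem _ hA) (V.smul_mem _ hB),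
      _, V.add_mem (V.smul_mem _ hB) (V.smul_mem _ hA), (smul_ofReIm ..).symm⟩

end Complexification

section HamiltonMap

variable {n : ℕ} {q : QuadraticMap ℝ (RV n) ℂ}

theorem isHamiltonMap_reLm_compQuadraticMap {G : Module.End ℝ (RV n)}
    (hG : ∀ X Y : RV n, ((1 / 2 : ℂ) * polar (⇑q) X Y).re = sympR X (G Y)) :
    IsHamiltonMap (Complex.reLm.compQuadraticMap q) G := fun X Y => by
  rw [← hG, one_div, mul_comm, ← div_eq_mul_inv, Complex.div_ofNat_re]
  rfl

theorem isHamiltonMap_imLm_compQuadraticMap {H : Module.End ℝ (RV n)}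
    (hH : ∀ X Y : RV n, ((1 / 2 : ℂ) * polar (⇑q) X Y).im = sympR X (H Y)) :
    IsHamiltonMap (Complex.imLm.compQuadraticMap q) H := fun X Y => by
  rw [← hH, one_div, mul_comm, ← div_eq_mul_inv, Complex.div_ofNat_im]
  rfl

theorem eq_bot_of_invariant_of_le_ker {G H : Module.End ℝ (RV n)} {F : CV n →ₗ[ℂ] CV n}
    (hell : ∀ X : RV n, q X = 0 → X = 0)
    (hG : IsHamiltonMap (Complex.reLm.compQuadraticMap q) G)
    (hH : IsHamiltonMap (Complex.imLm.compQuadraticMap q) H)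
    (hGH : ∀ X : RV n, F (toC X) = toC (G X) + Complex.I • toC (H X))
    (hnoreal : ∀ (lam : ℝ) (Z : CV n), Z ≠ 0 → F Z ≠ (lam : ℂ) • Z)
    {V : Submodule ℝ (RV n)} (hVH : ∀ U ∈ V, H U ∈ V) (hVG : V ≤ LinearMap.ker G) : V = ⊥ := by
  by_contra hV
  have hFV : ∀ Z ∈ V.complexify, F Z ∈ V.complexify := by
    rintro _ ⟨A, hA, B, hB, rfl⟩
    rw [map_ofReIm hGH, hVG hA, hVG hB, zero_sub, add_zero]
    exact ⟨_, V.neg_mem (hVH B hB), _, hVH A hA, rfl⟩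
  have hVc : V.complexify ≠ ⊥ := by
    obtain ⟨U, hU, hU0⟩ := Submodule.ne_bot_iff _ |>.1 hV
    refine Submodule.ne_bot_iff _ |>.2 ⟨_, ⟨U, hU, 0, V.zero_mem, rfl⟩, ?_⟩
    rwa [← ofReIm_zero, Ne, ofReIm_inj, not_and_or, or_iff_left (not_not.2 rfl)]
  obtain ⟨c, _, ⟨A, hA, B, hB, rfl⟩, hZ, hFZ⟩ :=
    Module.End.exists_eigenvector_mem_of_invariant F hVc hFV
  have hc : c.im ≠ 0 := fun h => hnoreal c.re _ hZ <| by
    rw [hFZ]; congr 1; exact Complex.ext (by simp) (by simp [h])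
  rw [map_ofReIm hGH, hVG hA, hVG hB, zero_sub, add_zero, smul_ofReIm, ofReIm_inj] at hFZ
  have hsum := hH.apply_add_apply_eq_zero (A := A) (B := B) hc
    (by rw [hFZ.2, add_comm]) (by rw [← neg_neg (H B), hFZ.1]; module)
  have haniso : ((Complex.imLm.compQuadraticMap q).comp V.subtype).Anisotropic := by
    rintro ⟨U, hU⟩ hqU
    have hre := hG.apply_eq U
    rw [hVG hU] at hre
    exact Subtype.ext <| hell U <| Complex.ext (by simpa [sympR] using hre) (by simpa using hqU)
  obtain ⟨hA0, hB0⟩ := haniso.eq_zero_of_add_eq_zero (x := ⟨A, hA⟩) (y := ⟨B, hB⟩) hsum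
  rw [Submodule.mk_eq_zero] at hA0 hB0
  exact hZ (by rw [hA0, hB0, ofReIm_zero])

end HamiltonMap

theorem stmt12_general {n : ℕ} (q : QuadraticMap ℝ (RV n) ℂ)
    (hell : ∀ X : RV n, q X = 0 → X = 0)
    (hre : ∀ X : RV n, (q X).re ≤ 0)
    (G H : Module.End ℝ (RV n))
    (hG : ∀ X Y : RV n, ((1 / 2 : ℂ) * QuadraticMap.polar (⇑q) X Y).re = sympR X (G Y))
    (hH : ∀ X Y : RV n, ((1 / 2 : ℂ) * QuadraticMap.polar (⇑q) X Y).im = sympR X (H Y))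
    (F : CV n →ₗ[ℂ] CV n)
    (hGH : ∀ X : RV n, F (toC X) = toC (G X) + Complex.I • toC (H X))
    (hnoreal : ∀ (lam : ℝ) (Z : CV n), Z ≠ 0 → F Z ≠ (lam : ℂ) • Z) :
    ∀ X₀ : RV n, X₀ ≠ 0 → ∃ j₀ : ℕ, j₀ ≤ 2 * n - 1 ∧
      (q ((H ^ j₀) X₀)).re < 0 ∧ ∀ j < j₀, (q ((H ^ j) X₀)).re = 0 := by
  intro X₀ hX₀
  have hG' := isHamiltonMap_reLm_compQuadraticMap hG
  suffices h : ∃ j, j < 2 * n ∧ (q ((H ^ j) X₀)).re < 0 by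
    classical
    obtain ⟨hlt, hneg⟩ := Nat.find_spec h
    refine ⟨Nat.find h, by omega, hneg, fun j hj => (hre _).antisymm ?_⟩
    exact not_lt.1 fun hj' => Nat.find_min h hj ⟨hj.trans hlt, hj'⟩
  by_contra! hzero
  have hfinrank : Module.finrank ℝ (RV n) = 2 * n := by
    rw [Module.finrank_prod, Module.finrank_fin_fun]; ring
  set V := Submodule.span ℝ (Set.range fun j => (H ^ j) X₀)
  have hVG : V ≤ LinearMap.ker G := Submodule.span_le.2 <| by
    rintro _ ⟨k, rfl⟩
    refine H.pow_apply_mem_of_forall_lt_finrank (fun j hj => ?_) k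
    exact hG'.map_eq_zero_of_nonpos hre ((hre _).antisymm (hzero j (hfinrank ▸ hj)))
  have hV := eq_bot_of_invariant_of_le_ker hell hG' (isHamiltonMap_imLm_compQuadraticMap hH) hGH
    hnoreal (fun _ => H.apply_mem_span_range_pow_apply X₀) hVG
  exact hX₀ <| (Submodule.mem_bot ℝ).1 <| hV ▸ Submodule.subset_span ⟨0, by simp⟩

/-- let `q` be an elliptic complex quadratic form on `ℝ^(2n)` with
`Re q ≤ 0`, `Re q ≢ 0`, and Hamilton map `F = G + iH` with no real eigenvalue. Then for
every nonzero `X₀` there is `j₀ ≤ 2n-1` with `Re q((Im F)^{j₀} X₀) < 0` and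
`Re q((Im F)^j X₀) = 0` for all `j < j₀` (so `q` is of finite order `≤ 4n-2` at every
nonzero point of its numerical range). -/
theorem stmt12 {n : ℕ} (q : QuadraticMap ℝ (RV n) ℂ)
    (hell : ∀ X : RV n, q X = 0 → X = 0)
    (hre : ∀ X : RV n, (q X).re ≤ 0)
    (hne : ∃ X : RV n, (q X).re ≠ 0)
    (G H : Module.End ℝ (RV n))
    (hG : ∀ X Y : RV n, ((1 / 2 : ℂ) * QuadraticMap.polar (⇑q) X Y).re = sympR X (G Y))
    (hH : ∀ X Y : RV n, ((1 / 2 : ℂ) * QuadraticMap.polar (⇑q) X Y).im = sympR X (H Y))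
    (F : CV n →ₗ[ℂ] CV n)
    (hGH : ∀ X : RV n, F (toC X) = toC (G X) + Complex.I • toC (H X))
    (hnoreal : ∀ (lam : ℝ) (Z : CV n), Z ≠ 0 → F Z ≠ (lam : ℂ) • Z) :
    ∀ X₀ : RV n, X₀ ≠ 0 → ∃ j₀ : ℕ, j₀ ≤ 2 * n - 1 ∧
      (q ((H ^ j₀) X₀)).re < 0 ∧ ∀ j < j₀, (q ((H ^ j) X₀)).re = 0 :=
  stmt12_general q hell hre G H hG hH F hGH hnoreal
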